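/- arXiv:2311.14023 — 2 statements merged into one kernel-verified Lean document; each statement's English description precedes it below -/
import Mathlib

section
/- Let A be an n×n real SPSD matrix with eigenvalues λ₁ ≥ … ≥ λₙ ≥ 0, let Q ∈ ℝ^{n×ℓ} have orthonormal columns, let 1 ≤ k < n and ε ≥ 0. Suppose that there exists a matrix C ∈ ℝ^{ℓ×n} with rank(C) ≤ k such that ‖A − QC‖_F² ≤ (1+ε)‖A − A_(k)‖_F². Let Â := A^{1/2} P A^{1/2} be the Nyström approximation of A with respect to Q, where P is the orthogonal projection onto the column space of A^{1/2}Q. Then ‖A‖_F² − ‖Â_(k)‖_F² ≤ (1+ε)‖A − A_(k)‖_F². -/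
/-!
Since `P` fixes the columns of `A^{1/2} Q`, we have `Qᵀ Â = Qᵀ A`. Hence for `D = Q C` the
cross terms `⟨D, A⟩_F` and `⟨D, Â⟩_F` agree, and `‖A - D‖² = ‖A‖² - ‖Â‖² + ‖Â - D‖²`.
Eckart–Young for the SPSD matrix `Â` and the rank-`≤ k` matrix `D` gives
`‖Â - D‖² ≥ ‖Â‖² - ‖Â_(k)‖²`, so `‖A‖² - ‖Â_(k)‖² ≤ ‖A - Q C‖²`.

Eckart–Young in turn follows by restricting to an orthonormal basis `X` of `ker D`:
`‖M - D‖² ≥ ‖M X‖² = Σ νᵢ² cᵢ` with weights `cᵢ ∈ [0, 1]` summing to `dim ker D ≥ n - k`,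
and such a weighted sum is at least the sum of the `n - k` smallest `νᵢ²`.
-/

open Matrix BigOperators

/-- `M = U * diagonal μ * Uᵀ` is a spectral (eigen)decomposition of the symmetric matrix `M`,
with orthogonal `U` and eigenvalues `μ` listed in nonincreasing order. -/
def IsSpectralDecomp {n : ℕ} (M U : Matrix (Fin n) (Fin n) ℝ) (μ : Fin n → ℝ) : Prop :=
  Uᵀ * U = 1 ∧ Antitone μ ∧ M = U * Matrix.diagonal μ * Uᵀ

/-- Truncation of a spectral decomposition to its `k` largest (first `k`) eigenvalues:
the best rank-`k` approximation `M_(k)` associated with the decomposition `(U, μ)`. -/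
noncomputable def trunc {n : ℕ} (k : ℕ) (U : Matrix (Fin n) (Fin n) ℝ) (μ : Fin n → ℝ) :
    Matrix (Fin n) (Fin n) ℝ :=
  U * Matrix.diagonal (fun i : Fin n => if (i : ℕ) < k then μ i else 0) * Uᵀ

/-- `f` is operator monotone on SPSD matrices: for all `m` and all `m × m` SPSD matrices
`B ⪰ C ⪰ 0`, one has `f(B) ⪰ f(C)`, where matrix functions are computed through (any)
spectral decomposition. -/
def OperatorMonotone (f : ℝ → ℝ) : Prop :=
  ∀ (m : ℕ) (B C U V : Matrix (Fin m) (Fin m) ℝ) (β γ : Fin m → ℝ),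
    IsSpectralDecomp B U β → IsSpectralDecomp C V γ →
    B.PosSemidef → C.PosSemidef → (B - C).PosSemidef →
    (U * Matrix.diagonal (f ∘ β) * Uᵀ - V * Matrix.diagonal (f ∘ γ) * Vᵀ).PosSemidef

/-- Squared Frobenius norm `‖M‖_F² = Σ_{i,j} M_{ij}²`. -/
noncomputable def frobSq {m l : ℕ} (M : Matrix (Fin m) (Fin l) ℝ) : ℝ :=
  ∑ i, ∑ j, (M i j) ^ 2

/-- Frobenius norm. -/
noncomputable def frobNorm {m l : ℕ} (M : Matrix (Fin m) (Fin l) ℝ) : ℝ :=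
  Real.sqrt (frobSq M)

/-- The eigenvalues of a Hermitian matrix listed in nonincreasing order:
`eigsDesc hM i` is the `(i+1)`-st largest eigenvalue of `M`. -/
noncomputable def eigsDesc {m : ℕ} {M : Matrix (Fin m) (Fin m) ℝ} (hM : M.IsHermitian) :
    Fin m → ℝ :=
  fun i => (hM.eigenvalues ∘ Tuple.sort hM.eigenvalues) i.rev

/-- The singular values of `M` in nonincreasing order: `svDesc M i` is the `(i+1)`-st largest
singular value of `M`, i.e. the square root of the `(i+1)`-st largest eigenvalue of `MᴴM`. -/
noncomputable def svDesc {m l : ℕ} (M : Matrix (Fin m) (Fin l) ℝ) : Fin l → ℝ :=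
  fun i => Real.sqrt (eigsDesc (show (Mᵀ * M).IsHermitian by
    simpa [Matrix.conjTranspose_eq_transpose_of_trivial] using
      Matrix.isHermitian_conjTranspose_mul_self M) i)

/-- Nuclear norm: the sum of the singular values. -/
noncomputable def nuclearNorm {m l : ℕ} (M : Matrix (Fin m) (Fin l) ℝ) : ℝ :=
  ∑ i, svDesc M i

/-- Operator (spectral) norm: the largest singular value. -/
noncomputable def opNorm {m l : ℕ} (M : Matrix (Fin m) (Fin l) ℝ) : ℝ :=
  ⨆ i, svDesc M i

/-- `p`-th power of the Schatten `p`-norm: `‖M‖_(p)^p = Σᵢ σᵢ(M)^p`. -/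
noncomputable def schattenPow {m l : ℕ} (p : ℝ) (M : Matrix (Fin m) (Fin l) ℝ) : ℝ :=
  ∑ i, svDesc M i ^ p

/-- Schatten `p`-norm: `‖M‖_(p) = (Σᵢ σᵢ(M)^p)^(1/p)`. -/
noncomputable def schattenNorm {m l : ℕ} (p : ℝ) (M : Matrix (Fin m) (Fin l) ℝ) : ℝ :=
  (schattenPow p M) ^ (1 / p)

/-- The SPSD square root of an SPSD matrix (the definition `Matrix.PosSemidef.sqrt` of the
older Mathlib, restated here since it has been removed). -/
noncomputable def Matrix.PosSemidef.sqrt {n : Type*} [Fintype n] [DecidableEq n]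
    {A : Matrix n n ℝ} (hA : A.PosSemidef) : Matrix n n ℝ :=
  hA.1.eigenvectorUnitary.1 * diagonal (Real.sqrt ∘ hA.1.eigenvalues) *
    (star hA.1.eigenvectorUnitary : Matrix n n ℝ)

/-- `P` is the orthogonal projection onto the column space of `M`. -/
def IsOrthProjOnto {m l : ℕ} (P : Matrix (Fin m) (Fin m) ℝ) (M : Matrix (Fin m) (Fin l) ℝ) :
    Prop :=
  Pᵀ = P ∧ P * P = P ∧ P * M = M ∧ ∃ Y : Matrix (Fin l) (Fin m) ℝ, P = M * Y

open scoped MatrixOrder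

namespace Matrix.PosSemidef

variable {ι : Type*} [Fintype ι] [DecidableEq ι] {A : Matrix ι ι ℝ}

theorem sqrt_eq_cfcSqrt (hA : A.PosSemidef) : hA.sqrt = CFC.sqrt A := by
  rw [CFC.sqrt_eq_real_sqrt _ hA.nonneg, cfcₙ_eq_cfc, hA.1.cfc_eq]
  rfl

theorem sqrt_mul_sqrt (hA : A.PosSemidef) : hA.sqrt * hA.sqrt = A := by
  rw [hA.sqrt_eq_cfcSqrt, CFC.sqrt_mul_sqrt_self A hA.nonneg]

theorem transpose_sqrt (hA : A.PosSemidef) : hA.sqrtᵀ = hA.sqrt := by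
  rw [hA.sqrt_eq_cfcSqrt, ← conjTranspose_eq_transpose_of_trivial]
  exact (nonneg_iff_posSemidef.mp (CFC.sqrt_nonneg A)).isHermitian

end Matrix.PosSemidef

section frobSq

variable {m l p : ℕ}

theorem frobSq_eq_trace (M : Matrix (Fin m) (Fin l) ℝ) : frobSq M = (Mᵀ * M).trace := by
  simp only [frobSq, trace, diag, mul_apply, transpose_apply, sq]
  exact Finset.sum_comm

theorem frobSq_nonneg (M : Matrix (Fin m) (Fin l) ℝ) : 0 ≤ frobSq M := by
  unfold frobSq
  positivity

theorem frobSq_transpose (M : Matrix (Fin m) (Fin l) ℝ) : frobSq Mᵀ = frobSq M :=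
  Finset.sum_comm

theorem frobSq_sub (X Y : Matrix (Fin m) (Fin l) ℝ) :
    frobSq (X - Y) = frobSq X - 2 * (Yᵀ * X).trace + frobSq Y := by
  have hcross : (Xᵀ * Y).trace = (Yᵀ * X).trace := by
    rw [← trace_transpose, transpose_mul, transpose_transpose]
  simp only [frobSq_eq_trace, transpose_sub, Matrix.sub_mul, Matrix.mul_sub, trace_sub, hcross]
  ring

theorem frobSq_mul_of_transpose_mul_self_eq_one {W : Matrix (Fin p) (Fin m) ℝ}
    (hW : Wᵀ * W = 1) (N : Matrix (Fin m) (Fin l) ℝ) : frobSq (W * N) = frobSq N := by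
  rw [frobSq_eq_trace, frobSq_eq_trace, transpose_mul, Matrix.mul_assoc,
    ← Matrix.mul_assoc Wᵀ, hW, Matrix.one_mul]

theorem frobSq_mul_eq_trace (E : Matrix (Fin p) (Fin m) ℝ) (Y : Matrix (Fin m) (Fin l) ℝ) :
    frobSq (E * Y) = (Eᵀ * E * (Y * Yᵀ)).trace := by
  rw [frobSq_eq_trace, transpose_mul, Matrix.mul_assoc, trace_mul_comm, Matrix.mul_assoc,
    Matrix.mul_assoc, Matrix.mul_assoc]

theorem frobSq_conj {W : Matrix (Fin p) (Fin m) ℝ} (hW : Wᵀ * W = 1)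
    (N : Matrix (Fin m) (Fin m) ℝ) : frobSq (W * N * Wᵀ) = frobSq N := by
  rw [Matrix.mul_assoc, frobSq_mul_of_transpose_mul_self_eq_one hW, ← frobSq_transpose,
    transpose_mul, transpose_transpose, frobSq_mul_of_transpose_mul_self_eq_one hW,
    frobSq_transpose]

theorem frobSq_mul_le_of_transpose_mul_self_eq_one (E : Matrix (Fin p) (Fin m) ℝ)
    {X : Matrix (Fin m) (Fin l) ℝ} (hX : Xᵀ * X = 1) : frobSq (E * X) ≤ frobSq E := by
  set G : Matrix (Fin m) (Fin m) ℝ := 1 - X * Xᵀ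
  have hGt : Gᵀ = G := by simp [G, transpose_sub]
  have hGG : G * G = G := by
    simp only [G, sub_mul, mul_sub, Matrix.one_mul, Matrix.mul_one, Matrix.mul_assoc,
      ← Matrix.mul_assoc Xᵀ X, hX]
    abel
  -- `X Xᵀ` and `G = 1 - X Xᵀ` are complementary orthogonal projections.
  have hsplit : frobSq E = frobSq (E * X) + frobSq (E * G) := by
    rw [frobSq_mul_eq_trace, frobSq_mul_eq_trace, frobSq_eq_trace, hGt, hGG]
    simp only [G, Matrix.mul_sub, Matrix.mul_one, trace_sub]
    ring
  linarith [frobSq_nonneg (E * G)]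

theorem frobSq_diagonal_mul (d : Fin m → ℝ) (N : Matrix (Fin m) (Fin l) ℝ) :
    frobSq (diagonal d * N) = ∑ i, d i ^ 2 * ∑ j, N i j ^ 2 := by
  simp only [frobSq, diagonal_mul, mul_pow, Finset.mul_sum]

theorem frobSq_diagonal (d : Fin m → ℝ) : frobSq (diagonal d) = ∑ i, d i ^ 2 := by
  rw [← Matrix.mul_one (diagonal d), frobSq_diagonal_mul]
  simp [one_apply]

theorem frobSq_single_one (i : Fin m) : frobSq (single (0 : Fin 1) i (1 : ℝ)) = 1 := by
  simp [frobSq, single_apply, Finset.filter_eq]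

theorem frobSq_eq_of_transpose_mul_self_eq_one {Z : Matrix (Fin m) (Fin l) ℝ}
    (hZ : Zᵀ * Z = 1) : frobSq Z = l := by
  simp [frobSq_eq_trace, hZ]

theorem sum_sq_row_le_one_of_transpose_mul_self_eq_one {Z : Matrix (Fin m) (Fin l) ℝ}
    (hZ : Zᵀ * Z = 1) (i : Fin m) : ∑ j, Z i j ^ 2 ≤ 1 := by
  have h := frobSq_mul_le_of_transpose_mul_self_eq_one (single (0 : Fin 1) i 1) hZ
  rw [frobSq_single_one] at h
  simpa [frobSq] using h

end frobSq

theorem Antitone.sum_tail_le_sum_mul {n k : ℕ} {η c : Fin n → ℝ} (hη : Antitone η)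
    (hη0 : 0 ≤ η) (hc0 : 0 ≤ c) (hc1 : c ≤ 1) (hcs : (n : ℝ) - k ≤ ∑ i, c i) :
    ∑ i : Fin n, (if (i : ℕ) < k then 0 else η i) ≤ ∑ i, η i * c i := by
  rcases le_or_gt n k with hnk | hkn
  · have hhead : ∀ i : Fin n, (i : ℕ) < k := fun i => i.isLt.trans_le hnk
    simp only [hhead, if_true, Finset.sum_const_zero]
    exact Finset.sum_nonneg fun i _ => mul_nonneg (hη0 i) (hc0 i)
  -- Compare both sides termwise against the threshold `t = η k`.
  set t := η ⟨k, hkn⟩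
  have ht0 : 0 ≤ t := hη0 _
  have hterm : ∀ i : Fin n,
      (if (i : ℕ) < k then 0 else η i) - (if (i : ℕ) < k then 0 else t) ≤ (η i - t) * c i := by
    intro i
    by_cases hik : (i : ℕ) < k
    · have : t ≤ η i := hη (Fin.le_def.mpr hik.le)
      simp only [hik, if_true, sub_zero]
      exact mul_nonneg (by linarith) (hc0 i)
    · have : η i ≤ t := hη (Fin.le_def.mpr (not_lt.mp hik))
      have hci : c i ≤ 1 := hc1 i
      simp only [hik, if_false]
      nlinarith
  have hcard : ∑ i : Fin n, (if (i : ℕ) < k then 0 else t) = (n - k) * t := by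
    have h := Finset.card_filter_add_card_filter_not (s := Finset.univ)
      (fun i : Fin n => (i : ℕ) < k)
    rw [Finset.card_univ, Fintype.card_fin, Fin.card_filter_val_lt, min_eq_right hkn.le] at h
    rw [Finset.sum_ite, Finset.sum_const_zero, zero_add, Finset.sum_const, nsmul_eq_mul,
      show (Finset.univ.filter fun i : Fin n => ¬ (i : ℕ) < k).card = n - k by omega]
    push_cast [hkn.le]
    ring
  have hsum := Finset.sum_le_sum fun i (_ : i ∈ Finset.univ) => hterm i
  simp only [Finset.sum_sub_distrib, sub_mul, ← Finset.mul_sum, hcard] at hsum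
  nlinarith [mul_le_mul_of_nonneg_left hcs ht0]

theorem Matrix.exists_isometry_mul_eq_zero {p n : ℕ} (D : Matrix (Fin p) (Fin n) ℝ) :
    ∃ (m : ℕ) (X : Matrix (Fin n) (Fin m) ℝ), Xᵀ * X = 1 ∧ D * X = 0 ∧ D.rank + m = n := by
  let K := LinearMap.ker (toEuclideanLin D)
  let b := stdOrthonormalBasis ℝ K
  let v : Fin (Module.finrank ℝ K) → EuclideanSpace ℝ (Fin n) := fun j => b j
  refine ⟨Module.finrank ℝ K, of fun i j => v j i, ?_, ?_, ?_⟩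
  · have hv : Orthonormal ℝ v := b.orthonormal.comp_linearIsometry K.subtypeₗᵢ
    rw [← gram_eq_one_iff_orthonormal] at hv
    rw [← hv]
    ext i j
    simp only [gram_apply, mul_apply, transpose_apply, of_apply, PiLp.inner_apply,
      RCLike.inner_apply, conj_trivial]
    exact Finset.sum_congr rfl fun _ _ => mul_comm _ _
  · ext i j
    have hj : toEuclideanLin D (v j) = 0 := (b j).2
    simpa [mul_apply, mulVec, dotProduct] using congrArg (fun w => w i) hj
  · rw [rank_eq_finrank_range_toLin D (EuclideanSpace.basisFun (Fin p) ℝ).toBasis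
      (EuclideanSpace.basisFun (Fin n) ℝ).toBasis, ← toEuclideanLin_eq_toLin_orthonormal,
      LinearMap.finrank_range_add_finrank_ker, finrank_euclideanSpace_fin]

namespace IsSpectralDecomp

variable {n : ℕ} {M W : Matrix (Fin n) (Fin n) ℝ} {ν : Fin n → ℝ}

theorem nonneg_of_posSemidef (h : IsSpectralDecomp M W ν) (hM : M.PosSemidef) : 0 ≤ ν := by
  obtain ⟨hW, -, rfl⟩ := h
  have hdiag : Wᵀ * (W * diagonal ν * Wᵀ) * W = diagonal ν := by
    simp only [Matrix.mul_assoc, hW, Matrix.mul_one]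
    rw [← Matrix.mul_assoc, hW, Matrix.one_mul]
  have hpsd := hM.conjTranspose_mul_mul_same W
  rw [conjTranspose_eq_transpose_of_trivial, hdiag, posSemidef_diagonal_iff] at hpsd
  exact hpsd

theorem frobSq_sub_frobSq_trunc (h : IsSpectralDecomp M W ν) (k : ℕ) :
    frobSq M - frobSq (trunc k W ν) = ∑ i : Fin n, if (i : ℕ) < k then 0 else ν i ^ 2 := by
  obtain ⟨hW, -, rfl⟩ := h
  rw [trunc, frobSq_conj hW, frobSq_conj hW, frobSq_diagonal, frobSq_diagonal,
    ← Finset.sum_sub_distrib]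
  refine Finset.sum_congr rfl fun i _ => ?_
  split_ifs <;> ring

theorem frobSq_sub_frobSq_trunc_le (h : IsSpectralDecomp M W ν) (hν : 0 ≤ ν) {k : ℕ}
    {D : Matrix (Fin n) (Fin n) ℝ} (hD : D.rank ≤ k) :
    frobSq M - frobSq (trunc k W ν) ≤ frobSq (M - D) := by
  rw [h.frobSq_sub_frobSq_trunc k]
  obtain ⟨m, X, hX, hDX, hrank⟩ := D.exists_isometry_mul_eq_zero
  obtain ⟨hW, hanti, hM⟩ := h
  set Z := Wᵀ * X
  have hZ : Zᵀ * Z = 1 := by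
    rw [transpose_mul, transpose_transpose, Matrix.mul_assoc, ← Matrix.mul_assoc W,
      mul_eq_one_comm.mp hW, Matrix.one_mul, hX]
  have hMX : frobSq ((M - D) * X) = ∑ i, ν i ^ 2 * ∑ j, Z i j ^ 2 := by
    rw [Matrix.sub_mul, hDX, sub_zero, hM, Matrix.mul_assoc, Matrix.mul_assoc,
      frobSq_mul_of_transpose_mul_self_eq_one hW, frobSq_diagonal_mul]
  have hνsq : Antitone fun i => ν i ^ 2 := fun i j hij => pow_le_pow_left₀ (hν j) (hanti hij) 2
  have hrows : (n : ℝ) - k ≤ ∑ i, ∑ j, Z i j ^ 2 := by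
    rw [← frobSq, frobSq_eq_of_transpose_mul_self_eq_one hZ]
    have : (n : ℝ) ≤ k + m := by exact_mod_cast (by omega : n ≤ k + m)
    linarith
  calc ∑ i : Fin n, (if (i : ℕ) < k then 0 else ν i ^ 2)
      ≤ ∑ i, ν i ^ 2 * ∑ j, Z i j ^ 2 :=
        hνsq.sum_tail_le_sum_mul (fun i => sq_nonneg (ν i))
          (fun i => Finset.sum_nonneg fun j _ => sq_nonneg (Z i j))
          (sum_sq_row_le_one_of_transpose_mul_self_eq_one hZ) hrows
    _ = frobSq ((M - D) * X) := hMX.symm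
    _ ≤ frobSq (M - D) := frobSq_mul_le_of_transpose_mul_self_eq_one _ hX

end IsSpectralDecomp

namespace IsOrthProjOnto

variable {n l : ℕ} {P S : Matrix (Fin n) (Fin n) ℝ} {Q : Matrix (Fin n) (Fin l) ℝ}

theorem transpose_mul_sandwich (hP : IsOrthProjOnto P (S * Q)) (hS : Sᵀ = S) :
    Qᵀ * (S * P * S) = Qᵀ * (S * S) := by
  obtain ⟨hPt, -, hPSQ, -⟩ := hP
  have hQSP : Qᵀ * S * P = Qᵀ * S := by
    simpa [transpose_mul, hPt, hS, Matrix.mul_assoc] using congrArg transpose hPSQ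
  simp only [← Matrix.mul_assoc, hQSP]

theorem posSemidef_sandwich (hP : IsOrthProjOnto P (S * Q)) (hS : Sᵀ = S) :
    (S * P * S).PosSemidef := by
  obtain ⟨hPt, hPP, -, -⟩ := hP
  have hsq : S * P * S = (P * S)ᴴ * (P * S) := by
    rw [conjTranspose_eq_transpose_of_trivial, transpose_mul, hPt, hS, ← Matrix.mul_assoc,
      Matrix.mul_assoc S P P, hPP]
  rw [hsq]
  exact posSemidef_conjTranspose_mul_self _

end IsOrthProjOnto

theorem frobSq_sub_mul_eq_of_transpose_mul_eq {n l : ℕ} {X Y : Matrix (Fin n) (Fin n) ℝ}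
    {Q : Matrix (Fin n) (Fin l) ℝ} (h : Qᵀ * Y = Qᵀ * X) (C : Matrix (Fin l) (Fin n) ℝ) :
    frobSq (X - Q * C) = frobSq X - frobSq Y + frobSq (Y - Q * C) := by
  have hcross : ((Q * C)ᵀ * X).trace = ((Q * C)ᵀ * Y).trace := by
    rw [transpose_mul, Matrix.mul_assoc, Matrix.mul_assoc, h]
  rw [frobSq_sub, frobSq_sub, hcross]
  ring

theorem frobenius_projection_to_nystrom_general
    (n l k : ℕ) (ε : ℝ)
    (A U : Matrix (Fin n) (Fin n) ℝ) (μ : Fin n → ℝ)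
    (hA : A.PosSemidef)
    (Q : Matrix (Fin n) (Fin l) ℝ)
    (C : Matrix (Fin l) (Fin n) ℝ) (hC : C.rank ≤ k)
    (hnear : frobSq (A - Q * C) ≤ (1 + ε) * frobSq (A - trunc k U μ))
    (P Ahat : Matrix (Fin n) (Fin n) ℝ)
    (hP : IsOrthProjOnto P (hA.sqrt * Q))
    (hAhat : Ahat = hA.sqrt * P * hA.sqrt) :
    ∀ (W : Matrix (Fin n) (Fin n) ℝ) (ν : Fin n → ℝ), IsSpectralDecomp Ahat W ν →
      frobSq A - frobSq (trunc k W ν) ≤ (1 + ε) * frobSq (A - trunc k U μ) := by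
  intro W ν hdec
  have hS := hA.transpose_sqrt
  have hQ : Qᵀ * Ahat = Qᵀ * A := by
    rw [hAhat, hP.transpose_mul_sandwich hS, hA.sqrt_mul_sqrt]
  have hν : 0 ≤ ν := hdec.nonneg_of_posSemidef (hAhat ▸ hP.posSemidef_sandwich hS)
  have hEY := hdec.frobSq_sub_frobSq_trunc_le hν ((rank_mul_le_right Q C).trans hC)
  have hpyth := frobSq_sub_mul_eq_of_transpose_mul_eq hQ C
  linarith

/-- Good one-sided projections imply good Nyström approximations
(Frobenius norm): if `Q` has orthonormal columns and some rank-`≤k` matrix `C` satisfies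
`‖A − QC‖_F² ≤ (1+ε)‖A − A_(k)‖_F²`, then the Nyström approximation
`Â = A^{1/2} P A^{1/2}` (with `P` the orthogonal projection onto the column space of
`A^{1/2}Q`) satisfies `‖A‖_F² − ‖Â_(k)‖_F² ≤ (1+ε)‖A − A_(k)‖_F²`. -/
theorem frobenius_projection_to_nystrom
    (n l k : ℕ) (hk : 1 ≤ k) (hkn : k < n) (ε : ℝ) (hε : 0 ≤ ε)
    (A U : Matrix (Fin n) (Fin n) ℝ) (μ : Fin n → ℝ)
    (hA : A.PosSemidef) (hdecA : IsSpectralDecomp A U μ)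
    (Q : Matrix (Fin n) (Fin l) ℝ) (hQ : Qᵀ * Q = 1)
    (C : Matrix (Fin l) (Fin n) ℝ) (hC : C.rank ≤ k)
    (hnear : frobSq (A - Q * C) ≤ (1 + ε) * frobSq (A - trunc k U μ))
    (P Ahat : Matrix (Fin n) (Fin n) ℝ)
    (hP : IsOrthProjOnto P (hA.sqrt * Q))
    (hAhat : Ahat = hA.sqrt * P * hA.sqrt) :
    ∀ (W : Matrix (Fin n) (Fin n) ℝ) (ν : Fin n → ℝ), IsSpectralDecomp Ahat W ν →
      frobSq A - frobSq (trunc k W ν) ≤ (1 + ε) * frobSq (A - trunc k U μ) :=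
  frobenius_projection_to_nystrom_general n l k ε A U μ hA Q C hC hnear P Ahat hP hAhat
end

section
/- Let A be an n×n real SPSD matrix with eigenvalues λ₁ ≥ … ≥ λₙ ≥ 0, let 1 ≤ k < n, let f : [0,∞) → [0,∞) be a continuous operator monotone function with f(0) = 0, let ε ≥ 0, and let B be an n×n real SPSD matrix with ‖A − B‖₂ ≤ (1+ε)·λ_{k+1}. Then ‖f(A) − f(B)‖₂ ≤ (1+ε)·f(λ_{k+1}). -/
open Matrix BigOperators

/-!
With `t = (1 + ε) λ_{k+1}`, the hypothesis says `-t ≤ A - B ≤ t` in the Loewner order (for a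
self-adjoint `D`, `‖D‖₂ ≤ r ↔ -r ≤ D ≤ r`), i.e. `A ≤ B + t` and `B ≤ A + t`. As `B + t` is
diagonalised by the same orthogonal matrix as `B`, operator monotonicity and subadditivity of `f`
on `[0, ∞)` give `f(A) ≤ f(B + t) ≤ f(B) + f(t)`, and symmetrically, so
`‖f(A) - f(B)‖₂ ≤ f(t) ≤ (1 + ε) f(λ_{k+1})`. Subadditivity and the last step both come from
`s ↦ f(s) / s` being nonincreasing, which operator monotonicity yields already on `2 × 2`
matrices: the rank-one `u vvᵀ` with `v₂² = θ` lies below `diag(c, θu + δ)` for `c` large, and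
comparing the `(2, 2)` entries of their images under `f` gives
`θ f(u) + (1 - θ) f(0) ≤ f(θu + δ)`.
-/

open scoped MatrixOrder Matrix.Norms.L2Operator

section SelfAdjointNorm

variable {A : Type*} [NormedRing A] [StarRing A] [NormedAlgebra ℝ A] [PartialOrder A]
  [StarOrderedRing A] [IsometricContinuousFunctionalCalculus ℝ A IsSelfAdjoint]
  [NonnegSpectrumClass ℝ A]

theorem IsSelfAdjoint.norm_le_iff_neg_le_and_le {a : A} (ha : IsSelfAdjoint a) {r : ℝ}
    (hr : 0 ≤ r) : ‖a‖ ≤ r ↔ -algebraMap ℝ A r ≤ a ∧ a ≤ algebraMap ℝ A r := by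
  rw [← map_neg, algebraMap_le_iff_le_spectrum, le_algebraMap_iff_spectrum_le,
    ← cfc_id ℝ a, norm_cfc_le_iff id a hr, cfc_id ℝ a]
  simp only [id, Real.norm_eq_abs, abs_le, ← forall_and]

theorem IsSelfAdjoint.norm_sub_le_iff {a b : A} (ha : IsSelfAdjoint a) (hb : IsSelfAdjoint b)
    {r : ℝ} (hr : 0 ≤ r) :
    ‖a - b‖ ≤ r ↔ a ≤ b + algebraMap ℝ A r ∧ b ≤ a + algebraMap ℝ A r := by
  rw [(ha.sub hb).norm_le_iff_neg_le_and_le hr, neg_le_sub_iff_le_add, sub_le_iff_le_add',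
    and_comm]

end SelfAdjointNorm

theorem forall_eigsDesc_iff {m : ℕ} {M : Matrix (Fin m) (Fin m) ℝ} (hM : M.IsHermitian)
    {p : ℝ → Prop} : (∀ i, p (eigsDesc hM i)) ↔ ∀ j, p (hM.eigenvalues j) :=
  ⟨fun h j => by simpa [eigsDesc] using h ((Tuple.sort hM.eigenvalues)⁻¹ j).rev,
    fun h _ => h _⟩

theorem opNorm_nonneg {m l : ℕ} (M : Matrix (Fin m) (Fin l) ℝ) : 0 ≤ opNorm M :=
  Real.iSup_nonneg fun _ => Real.sqrt_nonneg _

theorem opNorm_le_iff {m l : ℕ} (M : Matrix (Fin m) (Fin l) ℝ) {r : ℝ} (hr : 0 ≤ r) :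
    opNorm M ≤ r ↔ ∀ i, svDesc M i ≤ r :=
  ⟨fun h i => (le_ciSup (Set.finite_range _).bddAbove i).trans h, fun h => Real.iSup_le h hr⟩

theorem opNorm_eq_l2_opNorm {m l : ℕ} (M : Matrix (Fin m) (Fin l) ℝ) : opNorm M = ‖M‖ := by
  have hH : (Mᵀ * M).IsHermitian := by
    simpa [conjTranspose_eq_transpose_of_trivial] using isHermitian_conjTranspose_mul_self M
  have hpsd : (Mᵀ * M).PosSemidef := by
    simpa [conjTranspose_eq_transpose_of_trivial] using posSemidef_conjTranspose_mul_self M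
  have key : ∀ r, 0 ≤ r → (opNorm M ≤ r ↔ ‖M‖ ≤ r) := by
    intro r hr
    rw [opNorm_le_iff M hr, mul_self_le_mul_self_iff (norm_nonneg _) hr,
      ← l2_opNorm_conjTranspose_mul_self, conjTranspose_eq_transpose_of_trivial,
      ← cfc_id ℝ (Mᵀ * M), norm_cfc_le_iff id _ (mul_self_nonneg r),
      hH.spectrum_real_eq_range_eigenvalues, Set.forall_mem_range]
    simp only [svDesc, Real.sqrt_le_left hr, id, Real.norm_eq_abs,
      abs_of_nonneg (hpsd.eigenvalues_nonneg _), ← sq]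
    exact forall_eigsDesc_iff hH (p := (· ≤ r ^ 2))
  exact le_antisymm ((key _ (norm_nonneg _)).2 le_rfl) ((key _ (opNorm_nonneg M)).1 le_rfl)

section OrthogonalConjugation

variable {ι : Type*} [Fintype ι] [DecidableEq ι]

theorem posSemidef_mul_diagonal_mul_transpose (U : Matrix ι ι ℝ) {d : ι → ℝ}
    (hd : ∀ i, 0 ≤ d i) : (U * diagonal d * Uᵀ).PosSemidef := by
  simpa using (posSemidef_diagonal_iff.2 hd).mul_mul_conjTranspose_same U

theorem isSelfAdjoint_mul_diagonal_mul_transpose (U : Matrix ι ι ℝ) (d : ι → ℝ) :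
    IsSelfAdjoint (U * diagonal d * Uᵀ) := by
  simp [IsSelfAdjoint, star_eq_conjTranspose, conjTranspose_eq_transpose_of_trivial,
    Matrix.mul_assoc]

theorem mul_diagonal_mul_transpose_mono (U : Matrix ι ι ℝ) {d d' : ι → ℝ} (h : d ≤ d') :
    U * diagonal d * Uᵀ ≤ U * diagonal d' * Uᵀ := by
  have hd : diagonal d ≤ diagonal d' := by
    rw [Matrix.le_iff, diagonal_sub, posSemidef_diagonal_iff]
    exact fun i => sub_nonneg.2 (h i)
  simpa [star_eq_conjTranspose, conjTranspose_eq_transpose_of_trivial] using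
    star_left_conjugate_le_conjugate hd Uᵀ

theorem mul_diagonal_add_const_mul_transpose {U : Matrix ι ι ℝ} (hU : Uᵀ * U = 1)
    (d : ι → ℝ) (c : ℝ) :
    U * diagonal (fun i => d i + c) * Uᵀ = U * diagonal d * Uᵀ + algebraMap ℝ _ c := by
  have hd : diagonal (fun i => d i + c) = diagonal d + algebraMap ℝ (Matrix ι ι ℝ) c := by
    rw [algebraMap_eq_diagonal, diagonal_add]; rfl
  rw [hd, Matrix.mul_add, Matrix.add_mul, ← Algebra.commutes,
    Matrix.mul_assoc (algebraMap ℝ _ c), mul_eq_one_comm.mp hU, Matrix.mul_one]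

end OrthogonalConjugation

theorem isSpectralDecomp_diagonal {n : ℕ} {d : Fin n → ℝ} (hd : Antitone d) :
    IsSpectralDecomp (diagonal d) 1 d :=
  ⟨by simp, hd, by simp⟩

namespace IsSpectralDecomp

variable {n : ℕ} {M U : Matrix (Fin n) (Fin n) ℝ} {μ : Fin n → ℝ}

theorem posSemidef (h : IsSpectralDecomp M U μ) (hμ : ∀ i, 0 ≤ μ i) : M.PosSemidef :=
  h.2.2 ▸ posSemidef_mul_diagonal_mul_transpose U hμ

theorem isSelfAdjoint (h : IsSpectralDecomp M U μ) : IsSelfAdjoint M :=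
  h.2.2 ▸ isSelfAdjoint_mul_diagonal_mul_transpose U μ

theorem nonneg (h : IsSpectralDecomp M U μ) (hM : M.PosSemidef) (i : Fin n) : 0 ≤ μ i := by
  have hdiag : Uᵀ * M * U = diagonal μ := by
    rw [h.2.2, ← Matrix.mul_assoc, ← Matrix.mul_assoc, h.1, Matrix.one_mul, Matrix.mul_assoc,
      h.1, Matrix.mul_one]
  have hpsd : (diagonal μ).PosSemidef := by
    simpa [hdiag, conjTranspose_eq_transpose_of_trivial] using hM.mul_mul_conjTranspose_same Uᵀ
  simpa using hpsd.diag_nonneg (i := i)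

theorem add_algebraMap (h : IsSpectralDecomp M U μ) (t : ℝ) :
    IsSpectralDecomp (M + algebraMap ℝ _ t) U (fun i => μ i + t) :=
  ⟨h.1, h.2.1.add_const t, by rw [mul_diagonal_add_const_mul_transpose h.1, ← h.2.2]⟩

end IsSpectralDecomp

namespace OperatorMonotone

variable {f : ℝ → ℝ}

theorem convex_combination_le_apply_add (hf : OperatorMonotone f) {θ u δ : ℝ}
    (hθ₀ : 0 ≤ θ) (hθ₁ : θ ≤ 1) (hu : 0 ≤ u) (hδ : 0 < δ) :
    θ * f u + (1 - θ) * f 0 ≤ f (θ * u + δ) := by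
  set p := √θ
  set q := √(1 - θ)
  have hp : p ^ 2 = θ := Real.sq_sqrt hθ₀
  have hq : q ^ 2 = 1 - θ := Real.sq_sqrt (sub_nonneg.2 hθ₁)
  set s := θ * u + δ
  set c := s + q ^ 2 * u + (p * q * u) ^ 2 / δ
  have hs : 0 ≤ s := by positivity
  have hsc : s ≤ c := by
    have : 0 ≤ (p * q * u) ^ 2 / δ := by positivity
    nlinarith [sq_nonneg q]
  -- `V` is the reflection taking `e₀` to `(q, p)`, so `B = u (q, p) (q, p)ᵀ`.
  set V : Matrix (Fin 2) (Fin 2) ℝ := !![q, p; p, -q]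
  have hV : Vᵀ * V = 1 := by
    ext i j; fin_cases i <;> fin_cases j <;> simp [V, Matrix.mul_apply] <;> nlinarith
  have hB : IsSpectralDecomp (V * diagonal ![u, 0] * Vᵀ) V ![u, 0] :=
    ⟨hV, by simpa using hu, rfl⟩
  have hC : IsSpectralDecomp (diagonal ![c, s]) 1 ![c, s] :=
    isSpectralDecomp_diagonal (by simpa using hsc)
  -- `c` is chosen so that `C - B = diag(s, 0) + δ⁻¹ w wᵀ` with `w = (p q u, -δ)`.
  have hCB : (diagonal ![c, s] - V * diagonal ![u, 0] * Vᵀ).PosSemidef := by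
    have hsplit : diagonal ![c, s] - V * diagonal ![u, 0] * Vᵀ
        = diagonal ![s, 0] + δ⁻¹ • vecMulVec ![p * q * u, -δ] ![p * q * u, -δ] := by
      ext i j
      fin_cases i <;> fin_cases j <;>
        simp [V, c, s, ← hp, vecMulVec, Matrix.vecMul, dotProduct, Fin.sum_univ_two] <;>
        field_simp <;> ring
    rw [hsplit]
    exact (posSemidef_diagonal_iff.2 (Fin.forall_fin_two.2 ⟨hs, le_rfl⟩)).add
      ((posSemidef_vecMulVec_self_star _).smul (inv_nonneg.2 hδ.le))
  have hfCB := hf 2 _ _ 1 V _ _ hC hB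
    (hC.posSemidef (Fin.forall_fin_two.2 ⟨hs.trans hsc, hs⟩))
    (hB.posSemidef (Fin.forall_fin_two.2 ⟨hu, le_rfl⟩)) hCB
  have h11 : p * (f u * p) + q * (f 0 * q) ≤ f s := by
    simpa [V, Matrix.vecMul, dotProduct, Fin.sum_univ_two] using hfCB.diag_nonneg (i := 1)
  calc θ * f u + (1 - θ) * f 0 = p * (f u * p) + q * (f 0 * q) := by rw [← hq, ← hp]; ring
    _ ≤ f s := h11

theorem mul_apply_le_mul_apply (hf : OperatorMonotone f) (hf0 : f 0 = 0) {s u : ℝ}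
    (hs : 0 ≤ s) (hsu : s ≤ u) : s * f u ≤ u * f s := by
  rcases hs.eq_or_lt with rfl | hs
  · simp [hf0]
  rcases hsu.eq_or_lt with rfl | hsu
  · rfl
  have hu : 0 < u := hs.trans hsu
  -- Only `r < s` is reached (the gap `δ = s - r` must be positive), so pass to the limit
  -- `r → s⁻` on the side that does not involve `f`.
  have hlt : ∀ r ∈ Set.Ioo 0 s, r * f u ≤ u * f s := by
    rintro r ⟨hr, hrs⟩
    have key := hf.convex_combination_le_apply_add (div_nonneg hr.le hu.le)
      ((div_le_one hu).2 (hrs.trans hsu).le) hu.le (sub_pos.2 hrs)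
    rw [hf0, mul_zero, add_zero, div_mul_cancel₀ r hu.ne', add_sub_cancel] at key
    calc r * f u = u * (r / u * f u) := by field_simp
      _ ≤ u * f s := mul_le_mul_of_nonneg_left key hu.le
  exact le_of_tendsto (((continuous_mul_const (f u)).tendsto s).mono_left nhdsWithin_le_nhds)
    (Filter.eventually_of_mem (Ioo_mem_nhdsLT hs) hlt)

theorem apply_add_le (hf : OperatorMonotone f) (hf0 : f 0 = 0) {a b : ℝ} (ha : 0 ≤ a)
    (hb : 0 ≤ b) : f (a + b) ≤ f a + f b := by
  rcases (add_nonneg ha hb).eq_or_lt with hab | hab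
  · obtain ⟨rfl, rfl⟩ := (add_eq_zero_iff_of_nonneg ha hb).1 hab.symm
    simp [hf0]
  have hfa := hf.mul_apply_le_mul_apply hf0 ha (le_add_of_nonneg_right hb)
  have hfb := hf.mul_apply_le_mul_apply hf0 hb (le_add_of_nonneg_left ha)
  exact le_of_mul_le_mul_left (by linarith) hab

theorem apply_mul_le (hf : OperatorMonotone f) (hf0 : f 0 = 0) {c t : ℝ} (hc : 1 ≤ c)
    (ht : 0 ≤ t) : f (c * t) ≤ c * f t := by
  rcases ht.eq_or_lt with rfl | ht
  · simp [hf0]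
  have := hf.mul_apply_le_mul_apply hf0 ht.le (le_mul_of_one_le_left ht.le hc)
  exact le_of_mul_le_mul_left (by linarith) ht

theorem apply_le_apply_add (hf : OperatorMonotone f) (hf0 : f 0 = 0) {n : ℕ} {t : ℝ}
    (ht : 0 ≤ t) {A B U W : Matrix (Fin n) (Fin n) ℝ} {μ β : Fin n → ℝ}
    (hA : A.PosSemidef) (hB : B.PosSemidef) (hdecA : IsSpectralDecomp A U μ)
    (hdecB : IsSpectralDecomp B W β) (hAB : A ≤ B + algebraMap ℝ _ t) :
    U * diagonal (f ∘ μ) * Uᵀ ≤ W * diagonal (f ∘ β) * Wᵀ + algebraMap ℝ _ (f t) := by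
  have hBt : (B + algebraMap ℝ _ t).PosSemidef :=
    hB.add (Matrix.nonneg_iff_posSemidef.1 (algebraMap_nonneg _ ht))
  calc U * diagonal (f ∘ μ) * Uᵀ ≤ W * diagonal (f ∘ fun i => β i + t) * Wᵀ :=
        Matrix.le_iff.2 (hf n _ _ _ _ _ _ (hdecB.add_algebraMap t) hdecA hBt hA hAB)
    _ ≤ W * diagonal (fun i => f (β i) + f t) * Wᵀ :=
        mul_diagonal_mul_transpose_mono W fun i => hf.apply_add_le hf0 (hdecB.nonneg hB i) ht
    _ = W * diagonal (f ∘ β) * Wᵀ + algebraMap ℝ _ (f t) :=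
        mul_diagonal_add_const_mul_transpose hdecB.1 _ _

end OperatorMonotone

theorem opMonotone_perturbation_bound_general
    (n k : ℕ) (hkn : k < n) (ε : ℝ) (hε : 0 ≤ ε)
    (A B U W : Matrix (Fin n) (Fin n) ℝ) (μ β : Fin n → ℝ)
    (hA : A.PosSemidef) (hB : B.PosSemidef)
    (hdecA : IsSpectralDecomp A U μ) (hdecB : IsSpectralDecomp B W β)
    (f : ℝ → ℝ) (hfmono : OperatorMonotone f)
    (hfnn : ∀ x : ℝ, 0 ≤ x → 0 ≤ f x) (hf0 : f 0 = 0)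
    (hnear : opNorm (A - B) ≤ (1 + ε) * μ ⟨k, hkn⟩) :
    opNorm (U * Matrix.diagonal (f ∘ μ) * Uᵀ - W * Matrix.diagonal (f ∘ β) * Wᵀ) ≤
      (1 + ε) * f (μ ⟨k, hkn⟩) := by
  set t := (1 + ε) * μ ⟨k, hkn⟩
  have hμ : 0 ≤ μ ⟨k, hkn⟩ := hdecA.nonneg hA _
  have ht : 0 ≤ t := by positivity
  obtain ⟨hAB, hBA⟩ := (hdecA.isSelfAdjoint.norm_sub_le_iff hdecB.isSelfAdjoint ht).1
    (opNorm_eq_l2_opNorm (A - B) ▸ hnear)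
  rw [opNorm_eq_l2_opNorm]
  calc _ ≤ f t :=
        ((isSelfAdjoint_mul_diagonal_mul_transpose U _).norm_sub_le_iff
          (isSelfAdjoint_mul_diagonal_mul_transpose W _) (hfnn t ht)).2
          ⟨hfmono.apply_le_apply_add hf0 ht hA hB hdecA hdecB hAB,
            hfmono.apply_le_apply_add hf0 ht hB hA hdecB hdecA hBA⟩
    _ ≤ (1 + ε) * f (μ ⟨k, hkn⟩) := hfmono.apply_mul_le hf0 (by linarith) hμ

/-- Operator-norm perturbation bound for operator monotone functions with
`f(0) = 0`: if `‖A − B‖₂ ≤ (1+ε)·λ_{k+1}(A)`, then `‖f(A) − f(B)‖₂ ≤ (1+ε)·f(λ_{k+1}(A))`. -/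
theorem opMonotone_perturbation_bound
    (n k : ℕ) (hk : 1 ≤ k) (hkn : k < n) (ε : ℝ) (hε : 0 ≤ ε)
    (A B U W : Matrix (Fin n) (Fin n) ℝ) (μ β : Fin n → ℝ)
    (hA : A.PosSemidef) (hB : B.PosSemidef)
    (hdecA : IsSpectralDecomp A U μ) (hdecB : IsSpectralDecomp B W β)
    (f : ℝ → ℝ) (hfc : ContinuousOn f (Set.Ici 0)) (hfmono : OperatorMonotone f)
    (hfnn : ∀ x : ℝ, 0 ≤ x → 0 ≤ f x) (hf0 : f 0 = 0)
    (hnear : opNorm (A - B) ≤ (1 + ε) * μ ⟨k, hkn⟩) :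
    opNorm (U * Matrix.diagonal (f ∘ μ) * Uᵀ - W * Matrix.diagonal (f ∘ β) * Wᵀ) ≤
      (1 + ε) * f (μ ⟨k, hkn⟩) :=
  opMonotone_perturbation_bound_general n k hkn ε hε A B U W μ β hA hB hdecA hdecB f hfmono hfnn hf0
    hnear
end
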